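/- Let V = W₋ ⊕ W₊ be a real symplectic vector space with transverse Lagrangians W₋, W₊. Let U and W be Lagrangian subspaces both transverse to W₋, with graphs T_U, T_W : W₊ → W₋ and associated quadratic forms q⁺_U, q⁺_W on W₊. If the Lagrangian W is transverse to U and the quadratic form on U induced by writing W as a graph over U (in the decomposition V = U ⊕ W₋) is positive definite, then q⁺_W(l) − q⁺_U(l) > 0 for every nonzero l ∈ W₊; in particular q⁺_U < q⁺_W as quadratic forms. -/
import Mathlib


/-- Comparison of the quadratic forms of Lagrangian graphs.  Let `U` and `W` be
Lagrangians transverse to `W₋`, graphs over `W₊` of `T_U` and `T_W` with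
quadratic forms `q⁺_U (l) = h l (T_U l)` and `q⁺_W (l) = h l (T_W l)`.  If `W`
is transverse to `U` and the quadratic form of `W` written as a graph over `U`
(via `S : U → W₋`, in the decomposition `V = U ⊕ W₋`) is positive definite,
then `q⁺_W (l) − q⁺_U (l) > 0` for every nonzero `l ∈ W₊`, i.e. `q⁺_U < q⁺_W`. -/
theorem graph_quadratic_form_comparison
    {V : Type*} [AddCommGroup V] [Module ℝ V]
    (h : V →ₗ[ℝ] V →ₗ[ℝ] ℝ) (hskew : ∀ x y : V, h x y = - h y x)
    (Wp Wm U W : Submodule ℝ V)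
    (hWmiso : ∀ x ∈ Wm, ∀ y ∈ Wm, h x y = 0)
    (htransWWm : W ⊓ Wm = ⊥) (htransUW : U ⊓ W = ⊥) (htransPm : Wp ⊓ Wm = ⊥)
    (TU TW S : V →ₗ[ℝ] V)
    (hTUm : ∀ v ∈ Wp, TU v ∈ Wm) (hTUg : ∀ v ∈ Wp, v + TU v ∈ U)
    (hTWm : ∀ v ∈ Wp, TW v ∈ Wm) (hTWg : ∀ v ∈ Wp, v + TW v ∈ W)
    (hSm : ∀ u ∈ U, S u ∈ Wm) (hSg : ∀ u ∈ U, u + S u ∈ W)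
    (hpos : ∀ u ∈ U, u ≠ 0 → 0 < h u (S u)) :
    ∀ l ∈ Wp, l ≠ 0 → 0 < h l (TW l) - h l (TU l) := by
  intro l hl hl0
  set u := l + TU l with hu
  have hum : TU l ∈ Wm := hTUm l hl
  have hwm : TW l ∈ Wm := hTWm l hl
  have huU : u ∈ U := hTUg l hl
  have hSum : S u ∈ Wm := hSm u huU
  -- S u = TW l - TU l
  have hkey : S u = TW l - TU l := by
    have hdiff : (u + S u) - (l + TW l) ∈ W ⊓ Wm := by
      constructor
      · exact Submodule.sub_mem W (hSg u huU) (hTWg l hl)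
      · have : (u + S u) - (l + TW l) = TU l + S u - TW l := by
          rw [hu]; abel
        rw [this]
        exact Submodule.sub_mem Wm (Submodule.add_mem Wm hum hSum) hwm
    rw [htransWWm, Submodule.mem_bot] at hdiff
    have : TU l + S u - TW l = 0 := by
      rw [show TU l + S u - TW l = (u + S u) - (l + TW l) by rw [hu]; abel]
      exact hdiff
    linear_combination (norm := module) this
  have hune : u ≠ 0 := by
    intro h0
    apply hl0
    have : l = -TU l := by
      have := h0
      rw [hu] at this
      linear_combination (norm := module) this
    have hlm : l ∈ Wm := this ▸ Submodule.neg_mem Wm hum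
    have : l ∈ Wp ⊓ Wm := ⟨hl, hlm⟩
    rwa [htransPm, Submodule.mem_bot] at this
  have hp := hpos u huU hune
  rw [hkey, hu] at hp
  have e1 : h (l + TU l) (TW l - TU l)
      = h l (TW l) - h l (TU l) + h (TU l) (TW l) - h (TU l) (TU l) := by
    simp [map_add, map_sub]; ring
  rw [e1, hWmiso _ hum _ hwm, hWmiso _ hum _ hum] at hp
  linarith
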